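/- arXiv:1711.07736 — 5 statements merged into one kernel-verified Lean document; each statement's English description precedes it below -/
import Mathlib

section
/- Let G be a connected P5-free chordal bipartite graph with bipartition (A,B), and let (A1,B1) induce a maximum (in particular maximal) biclique of G with A1 ⊆ A, B1 ⊆ B. Then every vertex x in A \ A1 satisfies N(x) ⊊ B1, and every vertex y in B \ B1 satisfies N(y) ⊊ A1. -/
open SimpleGraph Finset

variable {V : Type*}

/-- `(A, B)` is a bipartition of the graph `G`. -/
def IsBipartitionOf (G : SimpleGraph V) (A B : Finset V) : Prop :=
  Disjoint A B ∧ (∀ v : V, v ∈ A ∨ v ∈ B) ∧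
    ∀ ⦃x y : V⦄, G.Adj x y → (x ∈ A ∧ y ∈ B) ∨ (x ∈ B ∧ y ∈ A)

/-- `G` has no induced path on `n` vertices. -/
def PFree (n : ℕ) (G : SimpleGraph V) : Prop :=
  ∀ f : Fin n → V, Function.Injective f →
    ¬ (∀ i j : Fin n, G.Adj (f i) (f j) ↔ ((i : ℕ) + 1 = (j : ℕ) ∨ (j : ℕ) + 1 = (i : ℕ)))

/-- Every cycle of length at least 6 has a chord. -/
def ChordalBipartite (G : SimpleGraph V) : Prop :=
  ∀ (v : V) (c : G.Walk v v), c.IsCycle → 6 ≤ c.length →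
    ∃ x y : V, x ∈ c.support ∧ y ∈ c.support ∧ G.Adj x y ∧ s(x, y) ∉ c.edges

/-- `(A1, B1)` is a maximal biclique of `G` within the bipartition `(A, B)`:
it is a complete bipartite subgraph and no vertex can be added to either side. -/
def IsMaximalBiclique (G : SimpleGraph V) (A B A1 B1 : Finset V) : Prop :=
  A1 ⊆ A ∧ B1 ⊆ B ∧ (∀ x ∈ A1, ∀ y ∈ B1, G.Adj x y) ∧
    (∀ x ∈ A, (∀ y ∈ B1, G.Adj x y) → x ∈ A1) ∧
    (∀ y ∈ B, (∀ x ∈ A1, G.Adj x y) → y ∈ B1)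

lemma walk_to_getVert {G : SimpleGraph V} {u v : V} (p : G.Walk u v) (i : ℕ) :
    ∃ q : G.Walk u (p.getVert i), q.length ≤ i := by
  induction p generalizing i with
  | nil => exact ⟨SimpleGraph.Walk.nil, by simp [SimpleGraph.Walk.getVert]⟩
  | cons h q ih =>
    cases i with
    | zero => exact ⟨SimpleGraph.Walk.nil.copy rfl (SimpleGraph.Walk.getVert_zero _).symm, by simp⟩
    | succ n =>
      obtain ⟨w, hw⟩ := ih n
      exact ⟨(w.cons h).copy rfl (SimpleGraph.Walk.getVert_cons_succ _ h).symm, by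
        simpa using Nat.succ_le_succ hw⟩

lemma walk_from_getVert {G : SimpleGraph V} {u v : V} (p : G.Walk u v) (i : ℕ) :
    ∃ q : G.Walk (p.getVert i) v, q.length ≤ p.length - i := by
  induction p generalizing i with
  | nil => exact ⟨SimpleGraph.Walk.nil, by simp⟩
  | cons h q ih =>
    cases i with
    | zero => exact ⟨(SimpleGraph.Walk.cons h q).copy (SimpleGraph.Walk.getVert_zero _).symm rfl,
        by simp⟩
    | succ n =>
      obtain ⟨w, hw⟩ := ih n
      exact ⟨w.copy (SimpleGraph.Walk.getVert_cons_succ _ h).symm rfl, by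
        simpa using hw⟩

lemma geodesic_ne {G : SimpleGraph V} {u v : V} (p : G.Walk u v) (hlen : p.length = G.dist u v)
    {i j : ℕ} (hij : i < j) (hj : j ≤ p.length) : p.getVert i ≠ p.getVert j := by
  intro he
  obtain ⟨q1, h1⟩ := walk_to_getVert p i
  obtain ⟨q2, h2⟩ := walk_from_getVert p j
  have := G.dist_le (q1.append (q2.copy he.symm rfl))
  rw [SimpleGraph.Walk.length_append, SimpleGraph.Walk.length_copy] at this
  omega

lemma geodesic_not_adj {G : SimpleGraph V} {u v : V} (p : G.Walk u v)
    (hlen : p.length = G.dist u v) {i j : ℕ} (hij : i + 1 < j) (hj : j ≤ p.length) :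
    ¬ G.Adj (p.getVert i) (p.getVert j) := by
  intro ha
  obtain ⟨q1, h1⟩ := walk_to_getVert p i
  obtain ⟨q2, h2⟩ := walk_from_getVert p j
  have := G.dist_le (q1.append (SimpleGraph.Walk.cons ha q2))
  rw [SimpleGraph.Walk.length_append, SimpleGraph.Walk.length_cons] at this
  omega

lemma walk_parity {G : SimpleGraph V} {A B : Finset V} (hbip : IsBipartitionOf G A B)
    {u v : V} (p : G.Walk u v) : Even p.length ↔ (u ∈ A ↔ v ∈ A) := by
  obtain ⟨hdisj, hcover, hadjAB⟩ := hbip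
  have hAB : ∀ z : V, z ∈ A ↔ z ∉ B := fun z =>
    ⟨fun h hb => (Finset.disjoint_left.mp hdisj h) hb,
     fun h => (hcover z).resolve_right h⟩
  induction p with
  | nil => simp
  | @cons a b c h q ih =>
    rw [SimpleGraph.Walk.length_cons, Nat.even_add_one]
    have h1 := hAB a; have h2 := hAB b; have h3 := hAB c
    rcases hadjAB h with ⟨ha, hb⟩ | ⟨ha, hb⟩ <;> tauto

lemma p5_contra {G : SimpleGraph V} (hp5 : PFree 5 G) {v0 v1 v2 v3 v4 : V}
    (h01 : G.Adj v0 v1) (h12 : G.Adj v1 v2) (h23 : G.Adj v2 v3) (h34 : G.Adj v3 v4)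
    (n02 : ¬G.Adj v0 v2) (n03 : ¬G.Adj v0 v3) (n04 : ¬G.Adj v0 v4)
    (n13 : ¬G.Adj v1 v3) (n14 : ¬G.Adj v1 v4) (n24 : ¬G.Adj v2 v4) : False := by
  have d01 : v0 ≠ v1 := h01.ne
  have d12 : v1 ≠ v2 := h12.ne
  have d23 : v2 ≠ v3 := h23.ne
  have d34 : v3 ≠ v4 := h34.ne
  have d02 : v0 ≠ v2 := fun h => n03 (h ▸ h23)
  have d03 : v0 ≠ v3 := fun h => n04 (h ▸ h34)
  have d04 : v0 ≠ v4 := fun h => n14 (h ▸ h01).symm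
  have d13 : v1 ≠ v3 := fun h => n03 (h ▸ h01)
  have d14 : v1 ≠ v4 := fun h => n04 (h ▸ h01)
  have d24 : v2 ≠ v4 := fun h => n14 (h ▸ h12)
  apply hp5 ![v0, v1, v2, v3, v4]
  · intro i j hf
    fin_cases i <;> fin_cases j <;> simp_all
  · intro i j
    have n20 : ¬G.Adj v2 v0 := fun h => n02 h.symm
    have n30 : ¬G.Adj v3 v0 := fun h => n03 h.symm
    have n40 : ¬G.Adj v4 v0 := fun h => n04 h.symm
    have n31 : ¬G.Adj v3 v1 := fun h => n13 h.symm
    have n41 : ¬G.Adj v4 v1 := fun h => n14 h.symm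
    have n42 : ¬G.Adj v4 v2 := fun h => n24 h.symm
    have h10 := h01.symm
    have h21 := h12.symm
    have h32 := h23.symm
    have h43 := h34.symm
    fin_cases i <;> fin_cases j <;> simp_all

theorem stmt1 [Fintype V] [DecidableEq V] (G : SimpleGraph V) [DecidableRel G.Adj]
    (A B A1 B1 : Finset V)
    (hconn : G.Connected) (hbip : IsBipartitionOf G A B)
    (hcb : ChordalBipartite G) (hp5 : PFree 5 G)
    (hmax : IsMaximalBiclique G A B A1 B1)
 :
    (∀ x ∈ A \ A1, G.neighborFinset x ⊂ B1) ∧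
    (∀ y ∈ B \ B1, G.neighborFinset y ⊂ A1) := by
  obtain ⟨hdisj, hcover, hadjAB⟩ := hbip
  obtain ⟨hA1A, hB1B, hbic, hmaxA, hmaxB⟩ := hmax
  have hAnB : ∀ z : V, z ∈ A → z ∉ B := fun z hz hb =>
    (Finset.disjoint_left.mp hdisj hz) hb
  have hBnA : ∀ z : V, z ∈ B → z ∉ A := fun z hz ha =>
    (Finset.disjoint_left.mp hdisj ha) hz
  -- sides of an edge
  have hsideA : ∀ {u w : V}, G.Adj u w → u ∈ A → w ∈ B := by
    intro u w h hu
    rcases hadjAB h with ⟨_, h2⟩ | ⟨h1, _⟩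
    · exact h2
    · exact absurd hu (hBnA u h1)
  have hsideB : ∀ {u w : V}, G.Adj u w → u ∈ B → w ∈ A := by
    intro u w h hu
    rcases hadjAB h with ⟨h1, _⟩ | ⟨_, h2⟩
    · exact absurd hu (hAnB u h1)
    · exact h2
  -- no edges within the same side
  have hnadjA : ∀ {u w : V}, u ∈ A → w ∈ A → ¬G.Adj u w := fun hu hw h =>
    hAnB _ hw (hsideA h hu)
  have hnadjB : ∀ {u w : V}, u ∈ B → w ∈ B → ¬G.Adj u w := fun hu hw h =>
    hBnA _ hw (hsideB h hu)
  -- the key claim: no edge between A \ A1 and B \ B1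
  have key : ∀ x b : V, x ∈ A → x ∉ A1 → b ∈ B → b ∉ B1 → ¬G.Adj x b := by
    intro x b hxA hxA1 hbB hbB1 hadj
    -- a vertex of B1 missed by x
    have hb1' : ∃ b1 ∈ B1, ¬G.Adj x b1 := by
      by_contra hcon
      push_neg at hcon
      exact hxA1 (hmaxA x hxA hcon)
    obtain ⟨b1, hb1B1, hxb1⟩ := hb1'
    -- a vertex of A1 missing b
    have ha1' : ∃ a1 ∈ A1, ¬G.Adj a1 b := by
      by_contra hcon
      push_neg at hcon
      exact hbB1 (hmaxB b hbB hcon)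
    obtain ⟨a1, ha1A1, ha1b⟩ := ha1'
    by_cases hc1 : ∃ b2 ∈ B1, G.Adj x b2
    · -- x has a neighbor in B1 : P5 = b, x, b2, a1, b1
      obtain ⟨b2, hb2B1, hxb2⟩ := hc1
      exact p5_contra hp5 hadj.symm hxb2 (hbic a1 ha1A1 b2 hb2B1).symm (hbic a1 ha1A1 b1 hb1B1)
        (hnadjB hbB (hB1B hb2B1)) (fun h => ha1b h.symm) (hnadjB hbB (hB1B hb1B1))
        (hnadjA hxA (hA1A ha1A1)) hxb1 (hnadjB (hB1B hb2B1) (hB1B hb1B1))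
    by_cases hc2 : ∃ a2 ∈ A1, G.Adj a2 b
    · -- b has a neighbor in A1 : P5 = x, b, a2, b1, a1
      obtain ⟨a2, ha2A1, ha2b⟩ := hc2
      exact p5_contra hp5 hadj ha2b.symm (hbic a2 ha2A1 b1 hb1B1) (hbic a1 ha1A1 b1 hb1B1).symm
        (hnadjA hxA (hA1A ha2A1)) hxb1 (hnadjA hxA (hA1A ha1A1))
        (hnadjB hbB (hB1B hb1B1)) (fun h => ha1b h.symm) (hnadjA (hA1A ha2A1) (hA1A ha1A1))
    -- now x has no neighbor in B1 and b has no neighbor in A1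
    push_neg at hc1 hc2
    have hxa1 : x ≠ a1 := fun h => hxA1 (h ▸ ha1A1)
    obtain ⟨p, _, hplen⟩ := hconn.exists_path_of_dist x a1
    have hdne : G.dist x a1 ≠ 0 :=
      SimpleGraph.dist_ne_zero_iff_ne_and_reachable.mpr ⟨hxa1, hconn.preconnected x a1⟩
    have heven : Even p.length := by
      rw [walk_parity ⟨hdisj, hcover, hadjAB⟩ p]
      exact ⟨fun _ => hA1A ha1A1, fun _ => hxA⟩
    have hcases : p.length = 2 ∨ 4 ≤ p.length := by
      obtain ⟨k, hk⟩ := heven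
      omega
    rcases hcases with h2 | h4
    · -- distance two: common neighbor c of x and a1
      set c := p.getVert 1 with hc
      have hxc : G.Adj x c := by
        have := p.adj_getVert_succ (by omega : 0 < p.length)
        rwa [p.getVert_zero] at this
      have hca1 : G.Adj c a1 := by
        have := p.adj_getVert_succ (by omega : 1 < p.length)
        have h2' : p.getVert 2 = a1 := by
          rw [← h2]; exact p.getVert_length
        rwa [h2'] at this
      have hcB : c ∈ B := hsideA hxc hxA
      have hcB1 : c ∉ B1 := fun hmem => hc1 c hmem hxc
      have ha'' : ∃ a'' ∈ A1, ¬G.Adj a'' c := by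
        by_contra hcon
        push_neg at hcon
        exact hcB1 (hmaxB c hcB hcon)
      obtain ⟨a'', ha''A1, ha''c⟩ := ha''
      -- P5 = x, c, a1, b1, a''
      exact p5_contra hp5 hxc hca1 (hbic a1 ha1A1 b1 hb1B1) (hbic a'' ha''A1 b1 hb1B1).symm
        (hnadjA hxA (hA1A ha1A1)) (hc1 b1 hb1B1) (hnadjA hxA (hA1A ha''A1))
        (hnadjB hcB (hB1B hb1B1)) (fun h => ha''c h.symm) (hnadjA (hA1A ha1A1) (hA1A ha''A1))
    · -- distance at least four: geodesic contains an induced P5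
      apply hp5 (fun i : Fin 5 => p.getVert i)
      · intro i j hf
        rcases lt_trichotomy (i : ℕ) (j : ℕ) with hlt | heq | hgt
        · exact absurd hf (geodesic_ne p hplen hlt (by omega))
        · exact Fin.ext heq
        · exact absurd hf.symm (geodesic_ne p hplen hgt (by omega))
      · intro i j
        constructor
        · intro hadj'
          by_contra hcon
          push_neg at hcon
          rcases lt_trichotomy (i : ℕ) (j : ℕ) with hlt | heq | hgt
          · exact geodesic_not_adj p hplen (by omega) (by omega) hadj'
          · rw [show i = j from Fin.ext heq] at hadj'
            exact G.irrefl hadj'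
          · exact geodesic_not_adj p hplen (by omega) (by omega) hadj'.symm
        · intro hij
          rcases hij with hij | hij
          · have := p.adj_getVert_succ (by omega : (i : ℕ) < p.length)
            rwa [hij] at this
          · have := p.adj_getVert_succ (by omega : (j : ℕ) < p.length)
            rw [hij] at this
            exact this.symm
  constructor
  · intro x hx
    rw [Finset.mem_sdiff] at hx
    obtain ⟨hxA, hxA1⟩ := hx
    rw [Finset.ssubset_def]
    constructor
    · intro b hb
      rw [SimpleGraph.mem_neighborFinset] at hb
      have hbB : b ∈ B := hsideA hb hxA
      by_contra hbB1
      exact key x b hxA hxA1 hbB hbB1 hb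
    · intro hsub
      exact hxA1 (hmaxA x hxA fun y hy =>
        (SimpleGraph.mem_neighborFinset G x y).mp (hsub hy))
  · intro y hy
    rw [Finset.mem_sdiff] at hy
    obtain ⟨hyB, hyB1⟩ := hy
    rw [Finset.ssubset_def]
    constructor
    · intro a ha
      rw [SimpleGraph.mem_neighborFinset] at ha
      have haA : a ∈ A := hsideB ha hyB
      by_contra haA1
      exact key a y haA haA1 hyB hyB1 ha.symm
    · intro hsub
      exact hyB1 (hmaxB y hyB fun a ha =>
        ((SimpleGraph.mem_neighborFinset G y a).mp (hsub ha)).symm)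
end

section
/- Let G be a connected P5-free chordal bipartite graph with bipartition (A,B) and maximum biclique (A1,B1). Let A2 = A \ A1. For any two distinct vertices x_i, x_j in A2, if deg(x_i) ≤ deg(x_j) then N(x_i) ⊆ N(x_j). -/
/-!
A shortest path in a connected `P₅`-free graph has at most three edges, and in a bipartite
graph two vertices of the same side are at even distance; so `x` and `y` have a common
neighbour `w`. If neither of `N(x)`, `N(y)` contained the other, then for
`u ∈ N(x) \ N(y)` and `v ∈ N(y) \ N(x)` the path `u - x - w - y - v` would be induced.
Hence the neighbourhoods are nested, and the degree inequality fixes the direction.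
-/

open SimpleGraph Finset

variable {V : Type*}

namespace SimpleGraph

variable {G : SimpleGraph V}

theorem Walk.sub_le_length_of_length_eq_dist {u v : V} {p : G.Walk u v}
    (hp : p.length = G.dist u v) {i j : ℕ} (hij : i ≤ j) (hj : j ≤ p.length)
    (q : G.Walk (p.getVert i) (p.getVert j)) : j - i ≤ q.length := by
  have := G.dist_le ((p.take i).append (q.append (p.drop j)))
  simp only [Walk.length_append, Walk.take_length, Walk.drop_length] at this
  omega

theorem Walk.eq_of_getVert_eq_of_length_eq_dist {u v : V} {p : G.Walk u v}
    (hp : p.length = G.dist u v) {i j : ℕ} (hi : i ≤ p.length) (hj : j ≤ p.length)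
    (h : p.getVert i = p.getVert j) : i = j := by
  have key {i j : ℕ} (hij : i ≤ j) (hj : j ≤ p.length) (h : p.getVert i = p.getVert j) :
      i = j := by
    have := p.sub_le_length_of_length_eq_dist hp hij hj (Walk.nil.copy rfl h)
    simp only [Walk.length_copy, Walk.length_nil] at this
    omega
  rcases le_total i j with hij | hji
  · exact key hij hj h
  · exact (key hji hi h.symm).symm

theorem Walk.adj_getVert_iff_of_length_eq_dist {u v : V} {p : G.Walk u v}
    (hp : p.length = G.dist u v) {i j : ℕ} (hi : i ≤ p.length) (hj : j ≤ p.length) :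
    G.Adj (p.getVert i) (p.getVert j) ↔ i + 1 = j ∨ j + 1 = i := by
  have key {i j : ℕ} (hij : i ≤ j) (hj : j ≤ p.length) :
      G.Adj (p.getVert i) (p.getVert j) ↔ i + 1 = j := by
    refine ⟨fun h => ?_, fun h => h ▸ p.adj_getVert_succ (by omega)⟩
    have := p.sub_le_length_of_length_eq_dist hp hij hj h.toWalk
    have hne : i ≠ j := fun hij => G.irrefl (hij ▸ h)
    simp only [Adj.toWalk, Walk.length_cons, Walk.length_nil] at this
    omega
  rcases le_total i j with hij | hji
  · rw [key hij hj]; omega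
  · rw [G.adj_comm, key hji hi]; omega

theorem Connected.dist_lt_of_pFree (hconn : G.Connected) {n : ℕ} (hP : PFree (n + 1) G)
    (u v : V) : G.dist u v < n := by
  obtain ⟨p, hp⟩ := hconn.exists_walk_length_eq_dist u v
  by_contra! hn
  refine hP (fun i => p.getVert i) (fun i j h => ?_) (fun i j => ?_)
  · exact Fin.ext (p.eq_of_getVert_eq_of_length_eq_dist hp (by omega) (by omega) h)
  · exact p.adj_getVert_iff_of_length_eq_dist hp (by omega) (by omega)

theorem not_pFree_five_of_induced_path {a b c d e : V} (hab : G.Adj a b) (hbc : G.Adj b c)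
    (hcd : G.Adj c d) (hde : G.Adj d e) (hac : ¬G.Adj a c) (had : ¬G.Adj a d)
    (hae : ¬G.Adj a e) (hbd : ¬G.Adj b d) (hbe : ¬G.Adj b e) (hce : ¬G.Adj c e) :
    ¬PFree 5 G := by
  intro hP
  refine hP ![a, b, c, d, e] (fun i j hij => ?_) (fun i j => ?_)
  · fin_cases i <;> fin_cases j <;> simp at hij ⊢ <;> subst hij <;> simp_all [G.adj_comm]
  · fin_cases i <;> fin_cases j <;> simp [*, G.adj_comm]

end SimpleGraph

namespace IsBipartitionOf

variable {G : SimpleGraph V} {A B : Finset V}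

theorem mem_iff_notMem_of_adj (hbip : IsBipartitionOf G A B) {u w : V} (h : G.Adj u w) :
    u ∈ A ↔ w ∉ A := by
  obtain ⟨hdisj, -, hedge⟩ := hbip
  rcases hedge h with ⟨hu, hw⟩ | ⟨hu, hw⟩
  · exact ⟨fun _ => Finset.disjoint_right.mp hdisj hw, fun _ => hu⟩
  · exact ⟨fun hu' => (Finset.disjoint_left.mp hdisj hu' hu).elim, fun hw' => (hw' hw).elim⟩

theorem even_dist_iff (hbip : IsBipartitionOf G A B) (hconn : G.Connected) (u v : V) :
    Even (G.dist u v) ↔ (u ∈ A ↔ v ∈ A) := by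
  classical
  obtain ⟨p, hp⟩ := hconn.exists_walk_length_eq_dist u v
  let c : G.Coloring Bool :=
    Coloring.mk (fun v => decide (v ∈ A)) fun h => by
      have := hbip.mem_iff_notMem_of_adj h
      simp only [ne_eq, decide_eq_decide]
      tauto
  simpa [← hp, c, Coloring.mk] using c.even_length_iff_congr p

theorem exists_adj_adj_of_pFree_five (hbip : IsBipartitionOf G A B) (hconn : G.Connected)
    (hP : PFree 5 G) {x y : V} (hx : x ∈ A) (hy : y ∈ A) (hxy : x ≠ y) :
    ∃ w, G.Adj x w ∧ G.Adj y w := by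
  have hlt := hconn.dist_lt_of_pFree hP x y
  have hpos := hconn.pos_dist_of_ne hxy
  obtain ⟨k, hk⟩ := (hbip.even_dist_iff hconn x y).mpr (iff_of_true hx hy)
  have h2 : G.edist x y = 2 := by
    rw [← (hconn x y).coe_dist_eq_edist, show G.dist x y = 2 by omega]; rfl
  obtain ⟨w, hw⟩ := (edist_eq_two_iff.mp h2).2.2
  exact ⟨w, G.mem_commonNeighbors.mp hw⟩

theorem neighborSet_subset_or_subset (hbip : IsBipartitionOf G A B) (hP : PFree 5 G)
    {x y w : V} (hx : x ∈ A) (hy : y ∈ A) (hxw : G.Adj x w) (hyw : G.Adj y w) :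
    G.neighborSet x ⊆ G.neighborSet y ∨ G.neighborSet y ⊆ G.neighborSet x := by
  by_contra! h
  obtain ⟨u, hxu, hyu⟩ := Set.not_subset.mp h.1
  obtain ⟨v, hyv, hxv⟩ := Set.not_subset.mp h.2
  simp only [mem_neighborSet] at hxu hyu hyv hxv
  have side := @hbip.mem_iff_notMem_of_adj
  have hu := (side hxu).mp hx
  have hw := (side hxw).mp hx
  have hv := (side hyv).mp hy
  -- each remaining non-edge joins two vertices on the same side
  refine not_pFree_five_of_induced_path hxu.symm hxw hyw.symm hyv ?_ ?_ ?_ ?_ hxv ?_ hP <;>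
    intro h <;> have := side h <;> tauto

end IsBipartitionOf

theorem stmt2_general [Fintype V] [DecidableEq V] (G : SimpleGraph V) [DecidableRel G.Adj]
    (A B A1 : Finset V)
    (hconn : G.Connected) (hbip : IsBipartitionOf G A B)
    (hp5 : PFree 5 G)
    {x y : V} (hx : x ∈ A \ A1) (hy : y ∈ A \ A1) (hxy : x ≠ y)
    (hdeg : G.degree x ≤ G.degree y) :
    G.neighborFinset x ⊆ G.neighborFinset y := by
  have hxA := (Finset.mem_sdiff.mp hx).1
  have hyA := (Finset.mem_sdiff.mp hy).1
  obtain ⟨w, hxw, hyw⟩ := hbip.exists_adj_adj_of_pFree_five hconn hp5 hxA hyA hxy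
  rcases hbip.neighborSet_subset_or_subset hp5 hxA hyA hxw hyw with hsub | hsub
  · simpa [← Finset.coe_subset] using hsub
  · have hyx : G.neighborFinset y ⊆ G.neighborFinset x := by
      simpa [← Finset.coe_subset] using hsub
    rw [Finset.eq_of_subset_of_card_le hyx (by simpa using hdeg)]

theorem stmt2 [Fintype V] [DecidableEq V] (G : SimpleGraph V) [DecidableRel G.Adj]
    (A B A1 B1 : Finset V)
    (hconn : G.Connected) (hbip : IsBipartitionOf G A B)
    (hcb : ChordalBipartite G) (hp5 : PFree 5 G)
    (hmax : IsMaximalBiclique G A B A1 B1)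
    {x y : V} (hx : x ∈ A \ A1) (hy : y ∈ A \ A1) (hxy : x ≠ y)
    (hdeg : G.degree x ≤ G.degree y) :
    G.neighborFinset x ⊆ G.neighborFinset y :=
  stmt2_general G A B A1 hconn hbip hp5 hx hy hxy hdeg
end

section
/- Let G be a connected P5-free chordal bipartite graph with bipartition (A,B) and maximum biclique (A1,B1), and let A2 = A \ A1 = {u_1,...,u_p} ordered so that deg(u_1) ≤ deg(u_2) ≤ ... ≤ deg(u_p). Then N(u_1) ⊆ N(u_2) ⊆ ... ⊆ N(u_p) (the Nested Neighborhood Ordering). -/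
open SimpleGraph Finset

variable {V : Type*}

/-!
If two vertices `a, b ∈ A` had incomparable neighbourhoods, with `x ∈ N(a) \ N(b)` and
`y ∈ N(b) \ N(a)`, then `x a w b y` would be an induced `P₅` for every common neighbour `w`
of `a` and `b`. Such a `w` exists: in a `P₅`-free graph a shortest path has at most three
edges, and in a bipartite graph two vertices of `A` are at even distance, so `dist a b = 2`.
Hence the neighbourhoods of the vertices of `A` form a chain, along which inclusion is
decided by degree.
-/

section

variable {G : SimpleGraph V}

lemma SimpleGraph.Walk.not_adj_getVert_of_length_eq_dist {u v : V} (p : G.Walk u v)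
    (hp : p.length = G.dist u v) {i j : ℕ} (hij : i + 2 ≤ j) (hj : j ≤ p.length) :
    ¬ G.Adj (p.getVert i) (p.getVert j) := fun hadj => by
  have := G.dist_le ((p.take i).append (cons hadj (p.drop j)))
  simp only [length_append, length_cons, take_length, drop_length] at this
  omega

lemma PFree.dist_lt {n : ℕ} (h : PFree (n + 1) G) {u v : V} (huv : G.Reachable u v) :
    G.dist u v < n := by
  by_contra! hn
  obtain ⟨p, hp⟩ := huv.exists_walk_length_eq_dist
  refine h (fun k => p.getVert k) (fun k l hkl => Fin.ext <|
    (p.isPath_of_length_eq_dist hp).getVert_injOn (by simp; omega) (by simp; omega) hkl)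
    fun k l => ⟨fun hadj => ?_, ?_⟩
  · by_contra! hfar
    rcases lt_trichotomy (k : ℕ) l with hkl | hkl | hkl
    · exact p.not_adj_getVert_of_length_eq_dist hp (by omega) (by omega) hadj
    · exact hadj.ne (by rw [hkl])
    · exact p.not_adj_getVert_of_length_eq_dist hp (by omega) (by omega) hadj.symm
  · rintro (hkl | hlk)
    · rw [← hkl]
      exact p.adj_getVert_succ (by omega)
    · rw [← hlk]
      exact (p.adj_getVert_succ (by omega)).symm

lemma injective_of_adj_iff_path_five {f : Fin 5 → V}
    (hf : ∀ i j : Fin 5, G.Adj (f i) (f j) ↔ ((i : ℕ) + 1 = j ∨ (j : ℕ) + 1 = i)) :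
    Function.Injective f := by
  intro i j hij
  by_contra hne
  -- two distinct vertices of `P₅` are adjacent or are told apart by a third one
  have separated : ∀ s t : Fin 5, s ≠ t → ((s : ℕ) + 1 = t ∨ (t : ℕ) + 1 = s) ∨
      ∃ k : Fin 5, ¬ (((s : ℕ) + 1 = k ∨ (k : ℕ) + 1 = s) ↔
        ((t : ℕ) + 1 = k ∨ (k : ℕ) + 1 = t)) := by
    decide
  rcases separated i j hne with hadj | ⟨k, hk⟩
  · exact G.irrefl (hij ▸ (hf i j).2 hadj)
  · exact hk ((hf i k).symm.trans (hij ▸ hf j k))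

namespace IsBipartitionOf

variable {A B : Finset V}

lemma symm (h : IsBipartitionOf G A B) : IsBipartitionOf G B A :=
  ⟨h.1.symm, fun v => (h.2.1 v).symm, fun _ _ hxy => (h.2.2 hxy).symm⟩

lemma mem_right_of_adj (h : IsBipartitionOf G A B) {a b : V} (ha : a ∈ A) (hab : G.Adj a b) :
    b ∈ B :=
  (h.2.2 hab).elim And.right fun hba => absurd hba.1 (disjoint_left.mp h.1 ha)

lemma not_adj_of_mem_left (h : IsBipartitionOf G A B) {a b : V} (ha : a ∈ A) (hb : b ∈ A) :
    ¬ G.Adj a b := fun hab =>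
  disjoint_left.mp h.1 hb (h.mem_right_of_adj ha hab)

open Classical in
noncomputable def coloring (h : IsBipartitionOf G A B) : G.Coloring Bool :=
  Coloring.mk (fun v => decide (v ∈ A)) fun {v w} hvw hc => by
    by_cases hv : v ∈ A
    · exact h.not_adj_of_mem_left hv (by simpa [hv] using hc) hvw
    · have hw : w ∉ A := by simpa [hv] using hc
      exact h.symm.not_adj_of_mem_left ((h.2.1 v).resolve_left hv)
        ((h.2.1 w).resolve_left hw) hvw

lemma even_length (h : IsBipartitionOf G A B) {a b : V} (ha : a ∈ A) (hb : b ∈ A)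
    (p : G.Walk a b) : Even p.length :=
  (h.coloring.even_length_iff_congr p).2 (by simp [coloring, Coloring.mk, ha, hb])

lemma commonNeighbors_nonempty (h : IsBipartitionOf G A B) (hconn : G.Connected)
    (hp5 : PFree 5 G) {a b : V} (ha : a ∈ A) (hb : b ∈ A) (hab : a ≠ b) :
    (G.commonNeighbors a b).Nonempty := by
  obtain ⟨p, hp⟩ := hconn.exists_walk_length_eq_dist a b
  have heven : Even (G.dist a b) := hp ▸ h.even_length ha hb p
  have hpos : 0 < G.dist a b := hconn.pos_dist_of_ne hab
  have hlt : G.dist a b < 4 := hp5.dist_lt (hconn a b)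
  have hdist : G.dist a b = 2 := by
    obtain ⟨k, hk⟩ := heven
    omega
  refine (edist_eq_two_iff.mp ?_).2.2
  rw [← (hconn a b).coe_dist_eq_edist, hdist]
  rfl

lemma neighborSet_subset_or_superset (h : IsBipartitionOf G A B) (hconn : G.Connected)
    (hp5 : PFree 5 G) {a b : V} (ha : a ∈ A) (hb : b ∈ A) :
    G.neighborSet a ⊆ G.neighborSet b ∨ G.neighborSet b ⊆ G.neighborSet a := by
  obtain rfl | hab := eq_or_ne a b
  · exact Or.inl subset_rfl
  by_contra! hinc
  obtain ⟨x, hax, hbx⟩ := Set.not_subset.mp hinc.1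
  obtain ⟨y, hby, hay⟩ := Set.not_subset.mp hinc.2
  obtain ⟨w, haw, hbw⟩ := h.commonNeighbors_nonempty hconn hp5 ha hb hab
  have hxB := h.mem_right_of_adj ha hax
  have hwB := h.mem_right_of_adj ha haw
  have hyB := h.mem_right_of_adj hb hby
  have hP5 : ∀ i j : Fin 5, G.Adj (![x, a, w, b, y] i) (![x, a, w, b, y] j) ↔
      ((i : ℕ) + 1 = j ∨ (j : ℕ) + 1 = i) := by
    have := h.not_adj_of_mem_left ha hb
    have := h.symm.not_adj_of_mem_left hxB hwB
    have := h.symm.not_adj_of_mem_left hxB hyB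
    have := h.symm.not_adj_of_mem_left hwB hyB
    intro i j
    fin_cases i <;> fin_cases j <;> simp_all [adj_comm]
  exact hp5 _ (injective_of_adj_iff_path_five hP5) hP5

end IsBipartitionOf

lemma SimpleGraph.neighborFinset_subset_of_degree_le [G.LocallyFinite] {a b : V}
    (hchain : G.neighborSet a ⊆ G.neighborSet b ∨ G.neighborSet b ⊆ G.neighborSet a)
    (hdeg : G.degree a ≤ G.degree b) : G.neighborFinset a ⊆ G.neighborFinset b := by
  simp_rw [← coe_neighborFinset, coe_subset] at hchain
  rcases hchain with hab | hba
  · exact hab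
  · rw [← card_neighborFinset_eq_degree, ← card_neighborFinset_eq_degree] at hdeg
    exact (eq_of_subset_of_card_le hba hdeg).superset

end

theorem stmt3_general [Fintype V] [DecidableEq V] (G : SimpleGraph V) [DecidableRel G.Adj]
    (A B A1 : Finset V) {p : ℕ} (u : Fin p → V)
    (hconn : G.Connected) (hbip : IsBipartitionOf G A B)
    (hp5 : PFree 5 G)
    -- `u` enumerates `A \ A1` in non-decreasing degree order (NNO)
    (huA : ∀ i, u i ∈ A \ A1)
    (humono : ∀ i j : Fin p, i ≤ j → G.degree (u i) ≤ G.degree (u j))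
 :
    ∀ i j : Fin p, i ≤ j → G.neighborFinset (u i) ⊆ G.neighborFinset (u j) := by
  intro i j hij
  have hA : ∀ k, u k ∈ A := fun k => (mem_sdiff.mp (huA k)).1
  exact neighborFinset_subset_of_degree_le
    (hbip.neighborSet_subset_or_superset hconn hp5 (hA i) (hA j)) (humono i j hij)

theorem stmt3 [Fintype V] [DecidableEq V] (G : SimpleGraph V) [DecidableRel G.Adj]
    (A B A1 B1 : Finset V) {p : ℕ} (u : Fin p → V)
    (hconn : G.Connected) (hbip : IsBipartitionOf G A B)
    (hcb : ChordalBipartite G) (hp5 : PFree 5 G)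
    (hmax : IsMaximalBiclique G A B A1 B1)
    -- `u` enumerates `A \ A1` in non-decreasing degree order (NNO)
    (hu : Function.Injective u) (huA : ∀ i, u i ∈ A \ A1)
    (huAll : ∀ x ∈ A \ A1, ∃ i, u i = x)
    (humono : ∀ i j : Fin p, i ≤ j → G.degree (u i) ≤ G.degree (u j))
 :
    ∀ i j : Fin p, i ≤ j → G.neighborFinset (u i) ⊆ G.neighborFinset (u j) :=
  stmt3_general G A B A1 u hconn hbip hp5 huA humono
end

section
/- Let G be a connected P5-free chordal bipartite graph with bipartition (A,B), maximum biclique (A1,B1), and NNO orderings A2 = (u_1,...,u_p), B2 = (v_1,...,v_q). If G has a Hamiltonian path and |A| = |B|, then deg(u_g) ≥ g for all 1 ≤ g ≤ p and deg(v_h) ≥ h for all 1 ≤ h ≤ q. -/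
/-!
In a connected `P₅`-free bipartite graph two vertices `x ≠ x'` on the same side have a common
neighbour `c`, so their neighbourhoods are comparable: otherwise `b - x - c - x' - b'` would be an
induced `P₅`. Hence the degree order `u` is nested, `N(u i) ⊆ N(u g)` for `i ≤ g`. If
`deg (u g) ≤ g`, the `g + 1` vertices `U = {u i | i ≤ g}` have all their neighbours in
`S = N(u g)`, which is smaller than `U` and, as `|A| = |B|`, misses a vertex `z` of `B`.
Cutting a Hamiltonian path at `z`, on either piece every vertex of `U` is followed (towards `z`)
by a vertex of `S`, so `|U| ≤ |S|`, a contradiction.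
-/

open SimpleGraph Finset

variable {V : Type*}

lemma PFree.false_of_inducedPath {G : SimpleGraph V} (hG : PFree 5 G) {a b c d e : V}
    (hab : G.Adj a b) (hbc : G.Adj b c) (hcd : G.Adj c d) (hde : G.Adj d e)
    (hac : ¬ G.Adj a c) (had : ¬ G.Adj a d) (hae : ¬ G.Adj a e)
    (hbd : ¬ G.Adj b d) (hbe : ¬ G.Adj b e) (hce : ¬ G.Adj c e) (hce_ne : c ≠ e) : False := by
  have hac' : a ≠ c := by rintro rfl; exact had hcd
  have had' : a ≠ d := by rintro rfl; exact hae hde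
  have hae' : a ≠ e := by rintro rfl; exact had hde.symm
  have hbd' : b ≠ d := by rintro rfl; exact hbe hde
  have hbe' : b ≠ e := by rintro rfl; exact hbd hde.symm
  refine hG ![a, b, c, d, e] ?_ fun i j => ?_
  · intro i j hij
    fin_cases i <;> fin_cases j <;> simp_all [hab.ne, hbc.ne, hcd.ne, hde.ne, eq_comm]
  · fin_cases i <;> fin_cases j <;> simp_all [adj_comm]

lemma IsBipartitionOf.isBipartiteWith {G : SimpleGraph V} {A B : Finset V}
    (h : IsBipartitionOf G A B) : G.IsBipartiteWith A B :=
  ⟨Finset.disjoint_coe.mpr h.1, h.2.2⟩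

namespace SimpleGraph

variable {G : SimpleGraph V}

lemma IsBipartiteWith.not_adj {s t : Set V} (h : G.IsBipartiteWith s t) {x y : V}
    (hx : x ∈ s) (hy : y ∈ s) : ¬ G.Adj x y :=
  fun hxy => Set.disjoint_left.mp h.disjoint hy (h.mem_of_mem_adj hx hxy)

theorem IsBipartiteWith.exists_adj_adj_of_walk {s t : Set V} (hbip : G.IsBipartiteWith s t)
    (hG : PFree 5 G) :
    ∀ {x y : V}, G.Walk x y → x ∈ s → y ∈ s → x ≠ y → ∃ c, G.Adj x c ∧ G.Adj y c
  | _, _, .nil, _, _, hne => absurd rfl hne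
  | _, _, .cons hxy .nil, hx, hy, _ => absurd hxy (hbip.not_adj hx hy)
  | x, y, .cons (v := b) hxb (.cons (v := z) hbz w), hx, hy, _ => by
    have hb : b ∈ t := hbip.mem_of_mem_adj hx hxb
    have hz : z ∈ s := hbip.mem_of_mem_adj' hb hbz.symm
    obtain rfl | hzy := eq_or_ne z y
    · exact ⟨b, hxb, hbz.symm⟩
    obtain ⟨c, hzc, hyc⟩ := hbip.exists_adj_adj_of_walk hG w hz hy hzy
    by_cases hxc : G.Adj x c
    · exact ⟨c, hxc, hyc⟩
    by_cases hyb : G.Adj y b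
    · exact ⟨b, hxb, hyb⟩
    have hc : c ∈ t := hbip.mem_of_mem_adj hz hzc
    exact (hG.false_of_inducedPath hxb hbz hzc hyc.symm (hbip.not_adj hx hz) hxc
      (hbip.not_adj hx hy) (hbip.symm.not_adj hb hc) (fun h => hyb h.symm)
      (hbip.not_adj hz hy) hzy).elim

theorem IsBipartiteWith.neighborSet_subset_or_subset {s t : Set V}
    (hbip : G.IsBipartiteWith s t) (hconn : G.Preconnected) (hG : PFree 5 G) {x y : V}
    (hx : x ∈ s) (hy : y ∈ s) :
    G.neighborSet x ⊆ G.neighborSet y ∨ G.neighborSet y ⊆ G.neighborSet x := by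
  obtain rfl | hxy := eq_or_ne x y
  · exact Or.inl subset_rfl
  by_contra! hcon
  obtain ⟨⟨b, hxb, hyb⟩, ⟨b', hyb', hxb'⟩⟩ :=
    And.imp Set.not_subset.mp Set.not_subset.mp hcon
  obtain ⟨c, hxc, hyc⟩ := hbip.exists_adj_adj_of_walk hG (hconn x y).some hx hy hxy
  have hb : b ∈ t := hbip.mem_of_mem_adj hx hxb
  have hc : c ∈ t := hbip.mem_of_mem_adj hx hxc
  have hb' : b' ∈ t := hbip.mem_of_mem_adj hy hyb'
  exact hG.false_of_inducedPath (G.adj_symm hxb) hxc (G.adj_symm hyc) hyb'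
    (hbip.symm.not_adj hb hc) (fun h => hyb h.symm) (hbip.symm.not_adj hb hb')
    (hbip.not_adj hx hy) hxb' (hbip.symm.not_adj hc hb') (by rintro rfl; exact hxb' hxc)

theorem IsBipartiteWith.neighborFinset_subset_of_degree_le [G.LocallyFinite] {s t : Set V}
    (hbip : G.IsBipartiteWith s t) (hconn : G.Preconnected) (hG : PFree 5 G) {x y : V}
    (hx : x ∈ s) (hy : y ∈ s) (hdeg : G.degree x ≤ G.degree y) :
    G.neighborFinset x ⊆ G.neighborFinset y := by
  rcases hbip.neighborSet_subset_or_subset hconn hG hx hy with h | h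
  · rwa [← coe_neighborFinset, ← coe_neighborFinset, Finset.coe_subset] at h
  · rw [← coe_neighborFinset, ← coe_neighborFinset, Finset.coe_subset] at h
    rw [Finset.eq_of_subset_of_card_le h hdeg]

theorem Walk.countP_support_le_countP_support_tail [DecidableEq V] {U S : Finset V}
    (hUS : ∀ x ∈ U, ∀ y, G.Adj x y → y ∈ S) :
    ∀ {x y : V} (w : G.Walk x y), y ∉ U →
      w.support.countP (· ∈ U) ≤ w.support.tail.countP (· ∈ S)
  | _, _, .nil, hy => by simp [hy]
  | x, _, .cons (v := x') hxx' w, hy => by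
    have ih := w.countP_support_le_countP_support_tail hUS hy
    have htail := w.support.tail_sublist.countP_le (p := (· ∈ S))
    have hcons := congrArg (List.countP (· ∈ S)) w.cons_tail_support
    rw [support_cons, List.tail_cons, List.countP_cons]
    by_cases hx : x ∈ U
    · rw [List.countP_cons_of_pos (by simpa using hUS x hx x' hxx')] at hcons
      simp only [hx, decide_true, if_true]
      omega
    · simp only [hx, decide_false, Bool.false_eq_true, if_false, add_zero]
      omega

theorem Walk.countP_support_le_countP_support [DecidableEq V] {U S : Finset V}
    (hUS : ∀ x ∈ U, ∀ y, G.Adj x y → y ∈ S) {x y : V} (w : G.Walk x y) (hy : y ∉ U) :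
    w.support.countP (· ∈ U) ≤ w.support.countP (· ∈ S) :=
  (w.countP_support_le_countP_support_tail hUS hy).trans
    (w.support.tail_sublist.countP_le (p := (· ∈ S)))

theorem Walk.IsHamiltonian.countP_support_eq_card [Fintype V] [DecidableEq V] {x y : V}
    {w : G.Walk x y} (hw : w.IsHamiltonian) (U : Finset V) :
    w.support.countP (· ∈ U) = #U := by
  rw [List.countP_eq_length_filter,
    ← List.toFinset_card_of_nodup (hw.isPath.support_nodup.filter _), List.toFinset_filter,
    hw.toFinset_support]
  simp

theorem Walk.IsHamiltonian.card_le_card_of_forall_adj_mem [Fintype V] [DecidableEq V] {a b : V}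
    {w : G.Walk a b} (hw : w.IsHamiltonian) {U S : Finset V}
    (hUS : ∀ x ∈ U, ∀ y, G.Adj x y → y ∈ S) {z : V} (hzU : z ∉ U) (hzS : z ∉ S) :
    #U ≤ #S := by
  have hz := hw.mem_support z
  have hsplit := w.take_spec hz
  have h₁ := (w.takeUntil z hz).countP_support_le_countP_support hUS hzU
  have h₂ := (w.dropUntil z hz).reverse.countP_support_le_countP_support hUS hzU
  rw [support_reverse, List.countP_reverse, List.countP_reverse] at h₂
  rw [← hw.countP_support_eq_card, ← hw.countP_support_eq_card, ← hsplit, support_append,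
    List.countP_append, List.countP_append]
  rw [← (w.dropUntil z hz).cons_tail_support, List.countP_cons, List.countP_cons] at h₂
  simp only [hzU, hzS, decide_false, Bool.false_eq_true, if_false, add_zero] at h₂ ⊢
  omega

theorem IsBipartiteWith.add_one_le_degree [Fintype V] [DecidableEq V] [DecidableRel G.Adj]
    {A B : Finset V} (hbip : G.IsBipartiteWith A B) (hconn : G.Preconnected) (hG : PFree 5 G)
    (hAB : #A ≤ #B) {a b : V} {w : G.Walk a b} (hw : w.IsHamiltonian) {p : ℕ} {u : Fin p → V}
    (hu : Function.Injective u) (huA : ∀ i, u i ∈ A) (hmono : Monotone fun i => G.degree (u i))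
    (g : Fin p) : (g : ℕ) + 1 ≤ G.degree (u g) := by
  by_contra! hlt
  set U := (Iic g).image u
  set S := G.neighborFinset (u g)
  have hUS : ∀ x ∈ U, ∀ y, G.Adj x y → y ∈ S := by
    simp only [U, Finset.mem_image, Finset.mem_Iic]
    rintro _ ⟨i, hig, rfl⟩ y hy
    exact hbip.neighborFinset_subset_of_degree_le hconn hG (huA i) (huA g) (hmono hig)
      ((mem_neighborFinset _ _ _).mpr hy)
  have hU : #U = g + 1 := by rw [card_image_of_injective _ hu, Fin.card_Iic]
  have hUA : U ⊆ A := by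
    simp only [U, Finset.image_subset_iff]
    exact fun i _ => huA i
  obtain ⟨z, hzB, hzS⟩ : ∃ z ∈ B, z ∉ S := by
    refine Finset.exists_mem_notMem_of_card_lt_card ?_
    have := card_le_card hUA
    rw [card_neighborFinset_eq_degree]
    omega
  have hzU : z ∉ U := fun hz => Set.disjoint_left.mp hbip.disjoint (hUA hz) hzB
  have := hw.card_le_card_of_forall_adj_mem hUS hzU hzS
  rw [card_neighborFinset_eq_degree] at this
  omega

end SimpleGraph

theorem stmt8_general [Fintype V] [DecidableEq V] (G : SimpleGraph V) [DecidableRel G.Adj]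
    (A B A1 B1 : Finset V) {p q : ℕ} (u : Fin p → V) (v : Fin q → V)
    (hconn : G.Connected) (hbip : IsBipartitionOf G A B)
    (hp5 : PFree 5 G)
    -- `u` enumerates `A \ A1` in non-decreasing degree order (NNO)
    (hu : Function.Injective u) (huA : ∀ i, u i ∈ A \ A1)
    (humono : ∀ i j : Fin p, i ≤ j → G.degree (u i) ≤ G.degree (u j))
    -- `v` enumerates `B \ B1` in non-decreasing degree order (NNO)
    (hv : Function.Injective v) (hvB : ∀ j, v j ∈ B \ B1)
    (hvmono : ∀ i j : Fin q, i ≤ j → G.degree (v i) ≤ G.degree (v j))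
    (hcard : A.card = B.card)
    (hham : ∃ (a b : V) (w : G.Walk a b), w.IsHamiltonian) :
    (∀ g : Fin p, (g : ℕ) + 1 ≤ G.degree (u g)) ∧
      (∀ h : Fin q, (h : ℕ) + 1 ≤ G.degree (v h)) := by
  obtain ⟨a, b, w, hw⟩ := hham
  have hAB := hbip.isBipartiteWith
  have hpre := hconn.preconnected
  exact ⟨hAB.add_one_le_degree hpre hp5 hcard.le hw hu (fun i => (mem_sdiff.mp (huA i)).1)
      (fun _ _ => humono _ _),
    hAB.symm.add_one_le_degree hpre hp5 hcard.ge hw hv (fun j => (mem_sdiff.mp (hvB j)).1)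
      (fun _ _ => hvmono _ _)⟩

theorem stmt8 [Fintype V] [DecidableEq V] (G : SimpleGraph V) [DecidableRel G.Adj]
    (A B A1 B1 : Finset V) {p q : ℕ} (u : Fin p → V) (v : Fin q → V)
    (hconn : G.Connected) (hbip : IsBipartitionOf G A B)
    (hcb : ChordalBipartite G) (hp5 : PFree 5 G)
    (hmax : IsMaximalBiclique G A B A1 B1)
    -- `u` enumerates `A \ A1` in non-decreasing degree order (NNO)
    (hu : Function.Injective u) (huA : ∀ i, u i ∈ A \ A1)
    (huAll : ∀ x ∈ A \ A1, ∃ i, u i = x)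
    (humono : ∀ i j : Fin p, i ≤ j → G.degree (u i) ≤ G.degree (u j))
    -- `v` enumerates `B \ B1` in non-decreasing degree order (NNO)
    (hv : Function.Injective v) (hvB : ∀ j, v j ∈ B \ B1)
    (hvAll : ∀ y ∈ B \ B1, ∃ j, v j = y)
    (hvmono : ∀ i j : Fin q, i ≤ j → G.degree (v i) ≤ G.degree (v j))
    (hcard : A.card = B.card)
    (hham : ∃ (a b : V) (w : G.Walk a b), w.IsHamiltonian) :
    (∀ g : Fin p, (g : ℕ) + 1 ≤ G.degree (u g)) ∧
      (∀ h : Fin q, (h : ℕ) + 1 ≤ G.degree (v h)) :=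
  stmt8_general G A B A1 B1 u v hconn hbip hp5 hu huA humono hv hvB hvmono hcard hham
end

section
/- Let G be a connected P5-free chordal bipartite graph with bipartition (A,B) and maximum biclique (A1,B1). Then A2 = A \ A1 and B2 = B \ B1 are independent sets, and every edge of G either joins A1 to B1, or joins A2 to B1, or joins B2 to A1. -/
open SimpleGraph Finset

variable {V : Type*}

lemma p5helper (G : SimpleGraph V) (hp5 : PFree 5 G) (v0 v1 v2 v3 v4 : V)
    (n01 : v0 ≠ v1) (n02 : v0 ≠ v2) (n03 : v0 ≠ v3) (n04 : v0 ≠ v4)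
    (n12 : v1 ≠ v2) (n13 : v1 ≠ v3) (n14 : v1 ≠ v4)
    (n23 : v2 ≠ v3) (n24 : v2 ≠ v4) (n34 : v3 ≠ v4)
    (a01 : G.Adj v0 v1) (a12 : G.Adj v1 v2) (a23 : G.Adj v2 v3) (a34 : G.Adj v3 v4)
    (e02 : ¬ G.Adj v0 v2) (e03 : ¬ G.Adj v0 v3) (e04 : ¬ G.Adj v0 v4)
    (e13 : ¬ G.Adj v1 v3) (e14 : ¬ G.Adj v1 v4) (e24 : ¬ G.Adj v2 v4) : False := by
  have e20 : ¬ G.Adj v2 v0 := fun h => e02 h.symm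
  have e30 : ¬ G.Adj v3 v0 := fun h => e03 h.symm
  have e40 : ¬ G.Adj v4 v0 := fun h => e04 h.symm
  have e31 : ¬ G.Adj v3 v1 := fun h => e13 h.symm
  have e41 : ¬ G.Adj v4 v1 := fun h => e14 h.symm
  have e42 : ¬ G.Adj v4 v2 := fun h => e24 h.symm
  apply hp5 ![v0, v1, v2, v3, v4]
  · intro i j h
    fin_cases i <;> fin_cases j <;> simp_all
  · intro i j
    fin_cases i <;> fin_cases j <;>
      simp_all [a01.symm, a12.symm, a23.symm, a34.symm]

lemma exists_walk_getVert_prefix {G : SimpleGraph V} :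
    ∀ {u v : V} (p : G.Walk u v) (i : ℕ), ∃ w : G.Walk u (p.getVert i), w.length ≤ i := by
  intro u v p
  induction p with
  | nil => intro i; exact ⟨Walk.nil, Nat.zero_le i⟩
  | cons h q ih =>
    intro i
    cases i with
    | zero => exact ⟨Walk.nil, le_rfl⟩
    | succ n =>
      obtain ⟨w, hw⟩ := ih n
      exact ⟨Walk.cons h w, Nat.succ_le_succ hw⟩

lemma exists_walk_getVert_suffix {G : SimpleGraph V} :
    ∀ {u v : V} (p : G.Walk u v) (i : ℕ),
      ∃ w : G.Walk (p.getVert i) v, w.length ≤ p.length - i := by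
  intro u v p
  induction p with
  | nil => intro i; exact ⟨Walk.nil, Nat.zero_le _⟩
  | cons h q ih =>
    intro i
    cases i with
    | zero =>
      exact ⟨(Walk.cons h q).copy (Walk.getVert_zero _).symm rfl, by simp⟩
    | succ n =>
      obtain ⟨w, hw⟩ := ih n
      refine ⟨w, ?_⟩
      simpa using hw.trans (by omega)

lemma key_noA2B2 [Fintype V] [DecidableEq V] (G : SimpleGraph V) (A B A1 B1 : Finset V)
    (hconn : G.Connected) (hbip : IsBipartitionOf G A B) (hp5 : PFree 5 G)
    (hmax : IsMaximalBiclique G A B A1 B1) :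
    ∀ x y, x ∈ A → x ∉ A1 → y ∈ B → y ∉ B1 → ¬ G.Adj x y := by
  obtain ⟨hdisj, _, hedge⟩ := hbip
  obtain ⟨hA1A, hB1B, hbic, hmaxA, hmaxB⟩ := hmax
  intro x y hxA hxA1 hyB hyB1 hxy
  have hAA : ∀ {u w : V}, u ∈ A → w ∈ A → ¬ G.Adj u w := by
    intro u w hu hw h
    rcases hedge h with ⟨_, h2⟩ | ⟨h1, _⟩
    · exact Finset.disjoint_left.mp hdisj hw h2
    · exact Finset.disjoint_left.mp hdisj hu h1
  have hBB : ∀ {u w : V}, u ∈ B → w ∈ B → ¬ G.Adj u w := by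
    intro u w hu hw h
    rcases hedge h with ⟨h1, _⟩ | ⟨_, h2⟩
    · exact Finset.disjoint_left.mp hdisj h1 hu
    · exact Finset.disjoint_left.mp hdisj h2 hw
  have hnAB : ∀ {u w : V}, u ∈ A → w ∈ B → u ≠ w :=
    fun hu hw he => Finset.disjoint_left.mp hdisj hu (he ▸ hw)
  obtain ⟨b0, hb0B1, hxb0⟩ : ∃ b ∈ B1, ¬ G.Adj x b := by
    by_contra hc; push_neg at hc; exact hxA1 (hmaxA x hxA hc)
  obtain ⟨a0, ha0A1, ha0y⟩ : ∃ a ∈ A1, ¬ G.Adj a y := by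
    by_contra hc; push_neg at hc; exact hyB1 (hmaxB y hyB hc)
  by_cases hc1 : ∃ b' ∈ B1, G.Adj x b'
  · obtain ⟨b', hb'B1, hxb'⟩ := hc1
    exact p5helper G hp5 y x b' a0 b0
      (hnAB hxA hyB).symm (fun h => hyB1 (h ▸ hb'B1))
      (hnAB (hA1A ha0A1) hyB).symm (fun h => hyB1 (h ▸ hb0B1))
      (hnAB hxA (hB1B hb'B1)) (fun h => hxA1 (h ▸ ha0A1)) (hnAB hxA (hB1B hb0B1))
      (hnAB (hA1A ha0A1) (hB1B hb'B1)).symm (fun h => hxb0 (h ▸ hxb'))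
      (hnAB (hA1A ha0A1) (hB1B hb0B1))
      hxy.symm hxb' (hbic a0 ha0A1 b' hb'B1).symm (hbic a0 ha0A1 b0 hb0B1)
      (hBB hyB (hB1B hb'B1)) (fun h => ha0y h.symm) (hBB hyB (hB1B hb0B1))
      (hAA hxA (hA1A ha0A1)) hxb0 (hBB (hB1B hb'B1) (hB1B hb0B1))
  by_cases hc2 : ∃ a' ∈ A1, G.Adj a' y
  · obtain ⟨a', ha'A1, ha'y⟩ := hc2
    exact p5helper G hp5 x y a' b0 a0
      (hnAB hxA hyB) (fun h => hxA1 (h ▸ ha'A1)) (hnAB hxA (hB1B hb0B1))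
      (fun h => hxA1 (h ▸ ha0A1))
      (hnAB (hA1A ha'A1) hyB).symm (fun h => hyB1 (h ▸ hb0B1))
      (hnAB (hA1A ha0A1) hyB).symm
      (hnAB (hA1A ha'A1) (hB1B hb0B1)) (fun h => ha0y (h ▸ ha'y))
      (hnAB (hA1A ha0A1) (hB1B hb0B1)).symm
      hxy ha'y.symm (hbic a' ha'A1 b0 hb0B1) (hbic a0 ha0A1 b0 hb0B1).symm
      (hAA hxA (hA1A ha'A1)) hxb0 (hAA hxA (hA1A ha0A1))
      (hBB hyB (hB1B hb0B1)) (fun h => ha0y h.symm) (hAA (hA1A ha'A1) (hA1A ha0A1))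
  push_neg at hc1 hc2
  obtain ⟨s, hsS, hmin⟩ := Finset.exists_min_image (A1 ∪ B1) (fun t => G.dist x t)
    ⟨b0, Finset.mem_union_right _ hb0B1⟩
  have hxs : x ≠ s := by
    rcases Finset.mem_union.mp hsS with h | h
    · exact fun he => hxA1 (he ▸ h)
    · exact hnAB hxA (hB1B h)
  have hdpos : G.dist x s ≠ 0 :=
    SimpleGraph.dist_ne_zero_iff_ne_and_reachable.mpr ⟨hxs, hconn.preconnected x s⟩
  obtain ⟨p, hp⟩ := hconn.exists_walk_length_eq_dist x s
  have hg0 : p.getVert 0 = x := p.getVert_zero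
  have hgL : p.getVert p.length = s := p.getVert_length
  have hL1 : 1 ≤ p.length := by omega
  have hadj : ∀ i, i < p.length → G.Adj (p.getVert i) (p.getVert (i + 1)) :=
    fun i hi => p.adj_getVert_succ hi
  have dA : ∀ i, G.dist x (p.getVert i) ≤ i := by
    intro i
    obtain ⟨w, hw⟩ := exists_walk_getVert_prefix p i
    exact (SimpleGraph.dist_le w).trans hw
  have dB : ∀ i, G.dist (p.getVert i) s ≤ p.length - i := by
    intro i
    obtain ⟨w, hw⟩ := exists_walk_getVert_suffix p i
    exact (SimpleGraph.dist_le w).trans hw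
  have hdeq : ∀ i, i ≤ p.length → G.dist x (p.getVert i) = i := by
    intro i hi
    have h1 := dA i
    have h2 : G.dist x s ≤ G.dist x (p.getVert i) + G.dist (p.getVert i) s :=
      hconn.dist_triangle
    have h3 := dB i
    omega
  have hne : ∀ i j, i < j → j ≤ p.length → p.getVert i ≠ p.getVert j := by
    intro i j hij hj he
    have e1 := hdeq i (le_of_lt (lt_of_lt_of_le hij hj))
    have e2 := hdeq j hj
    rw [he] at e1
    omega
  have hnadj : ∀ i j, i + 1 < j → j ≤ p.length → ¬ G.Adj (p.getVert i) (p.getVert j) := by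
    intro i j h1 h2 hadj'
    have e1 : G.dist (p.getVert i) (p.getVert j) = 1 :=
      SimpleGraph.dist_eq_one_iff_adj.mpr hadj'
    have t1 : G.dist x s ≤ G.dist x (p.getVert j) + G.dist (p.getVert j) s :=
      hconn.dist_triangle
    have t2 : G.dist x (p.getVert j) ≤
        G.dist x (p.getVert i) + G.dist (p.getVert i) (p.getVert j) :=
      hconn.dist_triangle
    have h3 := dA i
    have h4 := dB j
    omega
  have hnotS : ∀ i, i < p.length → p.getVert i ∉ A1 ∪ B1 := by
    intro i hi hmem
    have h1 := hmin _ hmem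
    have h2 := dA i
    omega
  have hside : ∀ i, i ≤ p.length →
      (Even i → p.getVert i ∈ A) ∧ (¬ Even i → p.getVert i ∈ B) := by
    intro i
    induction i with
    | zero =>
      intro _
      refine ⟨fun _ => by rw [hg0]; exact hxA, fun h => absurd Even.zero h⟩
    | succ n ih =>
      intro hn
      have hna := hadj n (by omega)
      have ihn := ih (by omega)
      constructor
      · intro hev
        rw [Nat.even_add_one] at hev
        have hgB := ihn.2 hev
        rcases hedge hna with ⟨h1, h2⟩ | ⟨h1, h2⟩
        · exact absurd h1 fun hh => Finset.disjoint_left.mp hdisj hh hgB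
        · exact h2
      · intro hnev
        rw [Nat.even_add_one, not_not] at hnev
        have hgA := ihn.1 hnev
        rcases hedge hna with ⟨h1, h2⟩ | ⟨h1, h2⟩
        · exact h2
        · exact absurd h1 fun hh => Finset.disjoint_left.mp hdisj hgA hh
  have hg1B : p.getVert 1 ∈ B := (hside 1 hL1).2 (by decide)
  have hL3 : p.length ≤ 3 := by
    by_contra hc
    push_neg at hc
    exact p5helper G hp5 (p.getVert 0) (p.getVert 1) (p.getVert 2) (p.getVert 3) (p.getVert 4)
      (hne 0 1 (by omega) (by omega)) (hne 0 2 (by omega) (by omega))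
      (hne 0 3 (by omega) (by omega)) (hne 0 4 (by omega) (by omega))
      (hne 1 2 (by omega) (by omega)) (hne 1 3 (by omega) (by omega))
      (hne 1 4 (by omega) (by omega)) (hne 2 3 (by omega) (by omega))
      (hne 2 4 (by omega) (by omega)) (hne 3 4 (by omega) (by omega))
      (hadj 0 (by omega)) (hadj 1 (by omega)) (hadj 2 (by omega)) (hadj 3 (by omega))
      (hnadj 0 2 (by omega) (by omega)) (hnadj 0 3 (by omega) (by omega))
      (hnadj 0 4 (by omega) (by omega)) (hnadj 1 3 (by omega) (by omega))
      (hnadj 1 4 (by omega) (by omega)) (hnadj 2 4 (by omega) (by omega))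
  obtain hL | hL | hL : p.length = 1 ∨ p.length = 2 ∨ p.length = 3 := by omega
  · -- L = 1 : the neighbour of x on the path lies in B1, contradiction
    have hg1 : p.getVert 1 = s := by rw [← hL]; exact hgL
    have hsB1 : s ∈ B1 := by
      rcases Finset.mem_union.mp hsS with h | h
      · exact absurd (hA1A h) fun hh =>
          Finset.disjoint_left.mp hdisj hh (hg1 ▸ hg1B)
      · exact h
    have : G.Adj x s := by
      have := hadj 0 (by omega)
      rwa [hg0, hg1] at this
    exact hc1 s hsB1 this
  · -- L = 2
    have hg2s : p.getVert 2 = s := by rw [← hL]; exact hgL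
    have hg2A : p.getVert 2 ∈ A := (hside 2 (by omega)).1 (by decide)
    have hg2A1 : p.getVert 2 ∈ A1 := by
      rcases Finset.mem_union.mp hsS with h | h
      · rw [hg2s]; exact h
      · have hb : p.getVert 2 ∈ B := by rw [hg2s]; exact hB1B h
        exact absurd hb fun hh => Finset.disjoint_left.mp hdisj hg2A hh
    have hyg2 : ¬ G.Adj y (p.getVert 2) := fun h => hc2 (p.getVert 2) hg2A1 h.symm
    have hyg1 : y ≠ p.getVert 1 := fun h => hyg2 (h ▸ hadj 1 (by omega))
    have hg1B1 : p.getVert 1 ∉ B1 := fun h =>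
      hnotS 1 (by omega) (Finset.mem_union_right _ h)
    have hxg1 : G.Adj x (p.getVert 1) := by
      have := hadj 0 (by omega); rwa [hg0] at this
    have hxg2ne : x ≠ p.getVert 2 := by
      have := hne 0 2 (by omega) (by omega); rwa [hg0] at this
    have hxg2 : ¬ G.Adj x (p.getVert 2) := by
      have := hnadj 0 2 (by omega) (by omega); rwa [hg0] at this
    exact p5helper G hp5 y x (p.getVert 1) (p.getVert 2) b0
      (hnAB hxA hyB).symm hyg1 (hnAB hg2A hyB).symm (fun h => hyB1 (h ▸ hb0B1))
      (hnAB hxA hg1B) hxg2ne (hnAB hxA (hB1B hb0B1))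
      (hnAB hg2A hg1B).symm (fun h => hg1B1 (h ▸ hb0B1)) (hnAB hg2A (hB1B hb0B1))
      hxy.symm hxg1 (hadj 1 (by omega)) (hbic (p.getVert 2) hg2A1 b0 hb0B1)
      (hBB hyB hg1B) hyg2 (hBB hyB (hB1B hb0B1))
      hxg2 hxb0 (hBB hg1B (hB1B hb0B1))
  · -- L = 3
    have hg3s : p.getVert 3 = s := by rw [← hL]; exact hgL
    have hg3B : p.getVert 3 ∈ B := (hside 3 (by omega)).2 (by decide)
    have hg2A : p.getVert 2 ∈ A := (hside 2 (by omega)).1 (by decide)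
    have hg3B1 : p.getVert 3 ∈ B1 := by
      rcases Finset.mem_union.mp hsS with h | h
      · have ha : p.getVert 3 ∈ A := by rw [hg3s]; exact hA1A h
        exact absurd ha fun hh => Finset.disjoint_left.mp hdisj hh hg3B
      · rw [hg3s]; exact h
    have hg2A1 : p.getVert 2 ∉ A1 := fun h =>
      hnotS 2 (by omega) (Finset.mem_union_left _ h)
    have hg1B1 : p.getVert 1 ∉ B1 := fun h =>
      hnotS 1 (by omega) (Finset.mem_union_right _ h)
    have hxg1 : G.Adj x (p.getVert 1) := by
      have := hadj 0 (by omega); rwa [hg0] at this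
    have hxg2ne : x ≠ p.getVert 2 := by
      have := hne 0 2 (by omega) (by omega); rwa [hg0] at this
    have hxg2 : ¬ G.Adj x (p.getVert 2) := by
      have := hnadj 0 2 (by omega) (by omega); rwa [hg0] at this
    have hxg3 : ¬ G.Adj x (p.getVert 3) := by
      have := hnadj 0 3 (by omega) (by omega); rwa [hg0] at this
    by_cases hyg2 : G.Adj y (p.getVert 2)
    · exact p5helper G hp5 x y (p.getVert 2) (p.getVert 3) a0
        (hnAB hxA hyB) hxg2ne (hnAB hxA hg3B) (fun h => hxA1 (h ▸ ha0A1))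
        (hnAB hg2A hyB).symm (fun h => hyB1 (h ▸ hg3B1)) (hnAB (hA1A ha0A1) hyB).symm
        (hnAB hg2A hg3B) (fun h => hg2A1 (h ▸ ha0A1)) (hnAB (hA1A ha0A1) hg3B).symm
        hxy hyg2 (hadj 2 (by omega)) (hbic a0 ha0A1 (p.getVert 3) hg3B1).symm
        hxg2 hxg3 (hAA hxA (hA1A ha0A1))
        (hBB hyB hg3B) (fun h => ha0y h.symm) (hAA hg2A (hA1A ha0A1))
    · have hyg1 : y ≠ p.getVert 1 := fun h => hyg2 (h ▸ hadj 1 (by omega))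
      exact p5helper G hp5 y x (p.getVert 1) (p.getVert 2) (p.getVert 3)
        (hnAB hxA hyB).symm hyg1 (hnAB hg2A hyB).symm (fun h => hyB1 (h ▸ hg3B1))
        (hnAB hxA hg1B) hxg2ne (hnAB hxA hg3B)
        (hnAB hg2A hg1B).symm (hne 1 3 (by omega) (by omega)) (hnAB hg2A hg3B)
        hxy.symm hxg1 (hadj 1 (by omega)) (hadj 2 (by omega))
        (hBB hyB hg1B) hyg2 (hBB hyB hg3B)
        hxg2 hxg3 (hnadj 1 3 (by omega) (by omega))

theorem stmt19 [Fintype V] [DecidableEq V] (G : SimpleGraph V) (A B A1 B1 : Finset V)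
    (hconn : G.Connected) (hbip : IsBipartitionOf G A B)
    (hcb : ChordalBipartite G) (hp5 : PFree 5 G)
    (hmax : IsMaximalBiclique G A B A1 B1)
 :
    (∀ x ∈ A \ A1, ∀ y ∈ A \ A1, ¬ G.Adj x y) ∧
    (∀ x ∈ B \ B1, ∀ y ∈ B \ B1, ¬ G.Adj x y) ∧
    (∀ ⦃x y : V⦄, G.Adj x y →
      (x ∈ A1 ∧ y ∈ B1) ∨ (y ∈ A1 ∧ x ∈ B1) ∨
      (x ∈ A \ A1 ∧ y ∈ B1) ∨ (y ∈ A \ A1 ∧ x ∈ B1) ∨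
      (x ∈ B \ B1 ∧ y ∈ A1) ∨ (y ∈ B \ B1 ∧ x ∈ A1)) := by
  obtain ⟨hdisj, -, hedge⟩ := id hbip
  have key := key_noA2B2 G A B A1 B1 hconn hbip hp5 hmax
  have hAA : ∀ {u w : V}, u ∈ A → w ∈ A → ¬ G.Adj u w := by
    intro u w hu hw h
    rcases hedge h with ⟨-, h2⟩ | ⟨h1, -⟩
    · exact Finset.disjoint_left.mp hdisj hw h2
    · exact Finset.disjoint_left.mp hdisj hu h1
  have hBB : ∀ {u w : V}, u ∈ B → w ∈ B → ¬ G.Adj u w := by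
    intro u w hu hw h
    rcases hedge h with ⟨h1, -⟩ | ⟨-, h2⟩
    · exact Finset.disjoint_left.mp hdisj h1 hu
    · exact Finset.disjoint_left.mp hdisj h2 hw
  refine ⟨?_, ?_, ?_⟩
  · intro x hx y hy
    exact hAA (Finset.mem_sdiff.mp hx).1 (Finset.mem_sdiff.mp hy).1
  · intro x hx y hy
    exact hBB (Finset.mem_sdiff.mp hx).1 (Finset.mem_sdiff.mp hy).1
  · intro x y hadj
    rcases hedge hadj with ⟨hxA, hyB⟩ | ⟨hxB, hyA⟩
    · by_cases hx1 : x ∈ A1 <;> by_cases hy1 : y ∈ B1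
      · exact Or.inl ⟨hx1, hy1⟩
      · refine Or.inr (Or.inr (Or.inr (Or.inr (Or.inr ⟨Finset.mem_sdiff.mpr ⟨hyB, hy1⟩, hx1⟩))))
      · exact Or.inr (Or.inr (Or.inl ⟨Finset.mem_sdiff.mpr ⟨hxA, hx1⟩, hy1⟩))
      · exact absurd hadj (key x y hxA hx1 hyB hy1)
    · by_cases hy1 : y ∈ A1 <;> by_cases hx1 : x ∈ B1
      · exact Or.inr (Or.inl ⟨hy1, hx1⟩)
      · exact Or.inr (Or.inr (Or.inr (Or.inr (Or.inl ⟨Finset.mem_sdiff.mpr ⟨hxB, hx1⟩, hy1⟩))))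
      · exact Or.inr (Or.inr (Or.inr (Or.inl ⟨Finset.mem_sdiff.mpr ⟨hyA, hy1⟩, hx1⟩)))
      · exact absurd hadj.symm (key y x hyA hy1 hxB hx1)
end
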